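/- arXiv:math/0211166 — 5 statements merged into one kernel-verified Lean document; each statement's English description precedes it below -/
import Mathlib

section
/- Let A, B, X be points in ℝ⁴ with B − A = h·e₄, h > 0, and let π : ℝ⁴ → ℝ³ be the orthogonal projection onto the first three coordinates. For every vector v ∈ ℝ⁴, the deviated area S_{ABX}(v) := 4·S(mid(B,X), mid(X,A), mid(A,B)+v) satisfies S_{ABX}(v) = h · ‖π(mid(A,B)+v) − π(mid(A,X))‖. -/
/-- Area of the triangle with vertices `P`, `Q`, `R`. -/
noncomputable def triArea {n : ℕ} (P Q R : EuclideanSpace ℝ (Fin n)) : ℝ :=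
  (1/2) * Real.sqrt (‖Q - P‖^2 * ‖R - P‖^2 - (inner ℝ (Q - P) (R - P) : ℝ)^2)

/-- Midpoint of two points. -/
noncomputable def mid {n : ℕ} (P Q : EuclideanSpace ℝ (Fin n)) : EuclideanSpace ℝ (Fin n) :=
  (1/2 : ℝ) • (P + Q)

/-- Orthogonal projection ℝ⁴ → ℝ³ onto the first three coordinates. -/
noncomputable def proj (x : EuclideanSpace ℝ (Fin 4)) : EuclideanSpace ℝ (Fin 3) :=
  (WithLp.equiv 2 (Fin 3 → ℝ)).symm fun i => x i.castSucc

/-- Inclusion ℝ³ → ℝ⁴, (v₁,v₂,v₃) ↦ (v₁,v₂,v₃,0). -/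
noncomputable def lift (v : EuclideanSpace ℝ (Fin 3)) : EuclideanSpace ℝ (Fin 4) :=
  (WithLp.equiv 2 (Fin 4 → ℝ)).symm (Fin.snoc (WithLp.equiv 2 (Fin 3 → ℝ) v) 0)

/-- Signed volume of the 4-simplex `P₀P₁P₂P₃P₄`. -/
noncomputable def vol4 (P₀ P₁ P₂ P₃ P₄ : EuclideanSpace ℝ (Fin 4)) : ℝ :=
  (1/24) * Matrix.det (Matrix.of fun i j => ![P₁ - P₀, P₂ - P₀, P₃ - P₀, P₄ - P₀] j i)

/-- Unsigned volume of the tetrahedron `Q₀Q₁Q₂Q₃` in ℝ³. -/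
noncomputable def vol3 (Q₀ Q₁ Q₂ Q₃ : EuclideanSpace ℝ (Fin 3)) : ℝ :=
  (1/6) * |Matrix.det (Matrix.of fun i j => ![Q₁ - Q₀, Q₂ - Q₀, Q₃ - Q₀] j i)|

/-- Deviated area of triangle ABX for a deviation v of edge AB. -/
noncomputable def devArea (A B X v : EuclideanSpace ℝ (Fin 4)) : ℝ :=
  4 * triArea (mid B X) (mid X A) (mid A B + v)

/-- Determinant of the Jacobian matrix at 0 of a map ℝ³ → ℝ³. -/
noncomputable def jacDet (f : EuclideanSpace ℝ (Fin 3) → (Fin 3 → ℝ)) : ℝ :=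
  Matrix.det (Matrix.of fun i j => fderiv ℝ f 0 (EuclideanSpace.single j 1) i)

/-- If B − A = h·e₄ with h > 0, then for every deviation vector v ∈ ℝ⁴,
the deviated area S_{ABX}(v) = 4·S(mid(B,X), mid(X,A), mid(A,B)+v) equals
h · ‖π(mid(A,B)+v) − π(mid(A,X))‖. -/
theorem devArea_eq_height_mul_projected_dist
    (A B X : EuclideanSpace ℝ (Fin 4)) (h : ℝ) (hh : 0 < h)
    (hAB : B - A = h • EuclideanSpace.single (3 : Fin 4) (1 : ℝ))
    (v : EuclideanSpace ℝ (Fin 4)) :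
    devArea A B X v = h * ‖proj (mid A B + v) - proj (mid A X)‖ := by
  have hBi : ∀ i, B i = A i + h * (if i = 3 then 1 else 0) := by
    intro i
    have := congrFun (congrArg (WithLp.equiv 2 (Fin 4 → ℝ)) hAB) i
    simp [EuclideanSpace.single_apply] at this ⊢
    linarith [this]
  have hB0 : B 0 = A 0 := by simpa using hBi 0
  have hB1 : B 1 = A 1 := by simpa using hBi 1
  have hB2 : B 2 = A 2 := by simpa using hBi 2
  have hB3 : B 3 = A 3 + h := by simpa using hBi 3
  have c0 : ((0:Fin 3).castSucc) = (0:Fin 4) := rfl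
  have c1 : ((1:Fin 3).castSucc) = (1:Fin 4) := rfl
  have c2 : ((2:Fin 3).castSucc) = (2:Fin 4) := rfl
  have key : ‖mid X A - mid B X‖^2 * ‖mid A B + v - mid B X‖^2
      - (inner ℝ (mid X A - mid B X) (mid A B + v - mid B X) : ℝ)^2
      = (h/2)^2 * ‖proj (mid A B + v) - proj (mid A X)‖^2 := by
    rw [← real_inner_self_eq_norm_sq, ← real_inner_self_eq_norm_sq, ← real_inner_self_eq_norm_sq]
    simp only [PiLp.inner_apply, RCLike.inner_apply, conj_trivial, Fin.sum_univ_four,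
      Fin.sum_univ_three, mid, proj, PiLp.sub_apply, PiLp.add_apply, PiLp.smul_apply,
      smul_eq_mul, WithLp.equiv_symm_apply, PiLp.toLp_apply]
    rw [c0, c1, c2, hB0, hB1, hB2, hB3]
    ring
  unfold devArea triArea
  rw [key, Real.sqrt_mul (sq_nonneg _), Real.sqrt_sq (by positivity : (0:ℝ) ≤ h/2),
    Real.sqrt_sq (norm_nonneg _)]
  ring
end

section
/- Let A, B, C, D, E be points in ℝ⁴ with B − A = h·e₄, h > 0, and let π : ℝ⁴ → ℝ³ be the orthogonal projection onto the first three coordinates. Then the (unsigned) 3-dimensional volume of the tetrahedron in ℝ³ with vertices π(A), π(mid(A,C)), π(mid(A,D)), π(mid(A,E)) equals |V(A,B,C,D,E)| / (2h), where V(A,B,C,D,E) is the signed volume of the 4-simplex ABCDE. Equivalently, 6·V₃ · h = 3·|V(A,B,C,D,E)|, where V₃ is the volume of that tetrahedron. -/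
/-- If B − A = h·e₄ with h > 0, the unsigned volume of the tetrahedron
π(A), π(mid(A,C)), π(mid(A,D)), π(mid(A,E)) in ℝ³ equals |V(A,B,C,D,E)| / (2h);
equivalently 6·V₃·h = 3·|V(A,B,C,D,E)|. -/
theorem projected_tetra_vol_eq
    (A B C D E : EuclideanSpace ℝ (Fin 4)) (h : ℝ) (hh : 0 < h)
    (hAB : B - A = h • EuclideanSpace.single (3 : Fin 4) (1 : ℝ)) :
    vol3 (proj A) (proj (mid A C)) (proj (mid A D)) (proj (mid A E))
        = |vol4 A B C D E| / (2 * h) ∧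
    6 * vol3 (proj A) (proj (mid A C)) (proj (mid A D)) (proj (mid A E)) * h
        = 3 * |vol4 A B C D E| := by
  classical
  -- abbreviate coordinates
  set d : ℝ := Matrix.det
      !![C 0 - A 0, D 0 - A 0, E 0 - A 0;
         C 1 - A 1, D 1 - A 1, E 1 - A 1;
         C 2 - A 2, D 2 - A 2, E 2 - A 2] with hd
  have hB : ∀ i : Fin 4, B i - A i = h * (if i = 3 then 1 else 0) := by
    intro i
    have := congrFun (congrArg (WithLp.equiv 2 (Fin 4 → ℝ)) hAB) i
    simpa [EuclideanSpace.single_apply, sub_eq_iff_eq_add] using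
      congrArg (fun f => f i) hAB
  have key : ∀ p q : ℝ, p = (1/8)*q → 1/6*|p| = 1/48*|q| := by
    intro p q hpq
    rw [hpq, abs_mul, abs_of_nonneg (by norm_num : (0:ℝ) ≤ (1/8:ℝ))]
    ring
  have h4 : vol4 A B C D E = -(h / 24) * d := by
    have hM : (Matrix.of fun i j => ![B - A, C - A, D - A, E - A] j i) =
        !![0, C 0 - A 0, D 0 - A 0, E 0 - A 0;
           0, C 1 - A 1, D 1 - A 1, E 1 - A 1;
           0, C 2 - A 2, D 2 - A 2, E 2 - A 2;
           h, C 3 - A 3, D 3 - A 3, E 3 - A 3] := by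
      ext i j
      fin_cases i <;> fin_cases j <;>
        simp [hB, PiLp.sub_apply]
    unfold vol4
    rw [hM, hd, Matrix.det_fin_three, Matrix.det_succ_column_zero]
    simp [Fin.sum_univ_succ, Matrix.det_fin_three, Matrix.submatrix_apply,
      Fin.succAbove, show Fin.castSucc (2:Fin 3) = (2:Fin 4) from rfl,
      show Fin.castSucc (1:Fin 3) = (1:Fin 4) from rfl,
      show Fin.castSucc (0:Fin 3) = (0:Fin 4) from rfl]
    ring
  have h3 : vol3 (proj A) (proj (mid A C)) (proj (mid A D)) (proj (mid A E))
      = (1/48) * |d| := by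
    unfold vol3
    have hcol : ∀ (X : EuclideanSpace ℝ (Fin 4)) (i : Fin 3),
        (proj (mid A X) - proj A) i = (1/2) * (X i.castSucc - A i.castSucc) := by
      intro X i
      simp [proj, mid]
      ring
    rw [Matrix.det_fin_three, hd, Matrix.det_fin_three]
    simp only [Matrix.of_apply, Matrix.cons_val', Matrix.cons_val_zero, Matrix.cons_val_one,
      Matrix.head_cons, Matrix.cons_val_two, Matrix.tail_cons, Matrix.empty_val',
      Matrix.cons_val_fin_one, hcol, Matrix.vecHead]
    have h0 : ((0 : Fin 3).castSucc : Fin 4) = 0 := rfl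
    have h1 : ((1 : Fin 3).castSucc : Fin 4) = 1 := rfl
    have h2 : ((2 : Fin 3).castSucc : Fin 4) = 2 := rfl
    rw [h0, h1, h2]
    exact key _ _ (by ring)
  have habs : |vol4 A B C D E| = (h / 24) * |d| := by
    rw [h4, abs_mul, abs_neg, abs_of_pos (by positivity : (0:ℝ) < h / 24)]
  constructor
  · rw [h3, habs]
    field_simp
    ring
  · rw [h3, habs]
    field_simp
    ring
end

section
/- Let A, B, C, D, E be points in ℝ⁴ with B − A = h·e₄, h > 0. Define f : ℝ³ → ℝ³ by f(v₁,v₂,v₃) = (S_{ABC}(v)², S_{ABD}(v)², S_{ABE}(v)²), where v = (v₁,v₂,v₃,0) ∈ ℝ⁴ and S_{ABX}(v) is the deviated area of triangle ABX. Then f is differentiable at 0 and |det Df(0)| = 24 · |V(A,B,C,D,E)| · h⁵, where V(A,B,C,D,E) is the signed volume of the 4-simplex ABCDE. (In the paper's notation, L_{AB}^{5/2}·|dv_x ∧ dv_y ∧ dv_z| = |d(S²_{ABC}) ∧ d(S²_{ABD}) ∧ d(S²_{ABE})| / (24·V_{ABCDE}), with L_{AB} = h².) -/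
lemma devArea_sq (A B X v : EuclideanSpace ℝ (Fin 4)) :
    devArea A B X v ^ 2
      = ‖A - B‖^2 * ‖(1/2:ℝ) • (A - X) + v‖^2
        - (inner ℝ (A - B) ((1/2:ℝ) • (A - X) + v) : ℝ)^2 := by
  have hQP : mid X A - mid B X = (1/2:ℝ) • (A - B) := by
    unfold mid; module
  have hRP : mid A B + v - mid B X = (1/2:ℝ) • (A - X) + v := by
    unfold mid; module
  set u := (1/2:ℝ) • (A - X) + v with hu
  have hE : ‖mid X A - mid B X‖^2 * ‖mid A B + v - mid B X‖^2
      - (inner ℝ (mid X A - mid B X) (mid A B + v - mid B X) : ℝ)^2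
      = (1/4) * (‖A - B‖^2 * ‖u‖^2 - (inner ℝ (A - B) u : ℝ)^2) := by
    rw [hQP, hRP, norm_smul, real_inner_smul_left]
    simp [mul_pow]
    ring
  have hnn : 0 ≤ ‖A - B‖^2 * ‖u‖^2 - (inner ℝ (A - B) u : ℝ)^2 := by
    have := abs_real_inner_le_norm (A - B) u
    nlinarith [abs_nonneg (inner ℝ (A - B) u : ℝ), sq_abs (inner ℝ (A - B) u : ℝ),
      norm_nonneg (A - B), norm_nonneg u]
  unfold devArea triArea
  rw [hE, mul_pow, mul_pow, Real.sq_sqrt (by linarith)]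
  ring

lemma lift_castSucc (w : EuclideanSpace ℝ (Fin 3)) (i : Fin 3) :
    lift w i.castSucc = w i := by
  simp [lift]

lemma lift_last (w : EuclideanSpace ℝ (Fin 3)) : lift w (3 : Fin 4) = 0 := by
  have : (3 : Fin 4) = Fin.last 3 := rfl
  rw [this]; exact Fin.snoc_last (α := fun _ => ℝ) (0 : ℝ) (WithLp.equiv 2 (Fin 3 → ℝ) w)

lemma devArea_sq_poly (A B X : EuclideanSpace ℝ (Fin 4)) (h : ℝ)
    (hAB : B - A = h • EuclideanSpace.single (3 : Fin 4) (1 : ℝ))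
    (w : EuclideanSpace ℝ (Fin 3)) :
    devArea A B X (lift w) ^ 2
      = h^2 * ∑ i : Fin 3, ((A - X) i.castSucc / 2 + w i)^2 := by
  rw [devArea_sq]
  have hBA : A - B = (-h) • EuclideanSpace.single (3 : Fin 4) (1 : ℝ) := by
    rw [neg_smul, ← hAB]; abel
  set u := (1/2:ℝ) • (A - X) + lift w with hu
  have hui : ∀ j : Fin 4, u j = (A - X) j / 2 + lift w j := by
    intro j
    simp [hu, PiLp.add_apply, PiLp.smul_apply, smul_eq_mul]
    ring
  have hnormAB : ‖A - B‖^2 = h^2 := by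
    rw [hBA, norm_smul]
    simp [EuclideanSpace.norm_single]
  have hinner : (inner ℝ (A - B) u : ℝ) = -h * u 3 := by
    rw [hBA, real_inner_smul_left, EuclideanSpace.inner_single_left]
    simp
  have hnormu : ‖u‖^2 = ∑ j : Fin 4, (u j)^2 := by
    rw [← real_inner_self_eq_norm_sq, PiLp.inner_apply]
    simp [sq, RCLike.inner_apply]
  rw [hnormAB, hinner, hnormu, Fin.sum_univ_castSucc]
  have h3 : Fin.last 3 = (3 : Fin 4) := rfl
  rw [h3]
  have hu3 : u 3 = (A - X) (3 : Fin 4) / 2 := by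
    rw [hui, lift_last]; ring
  rw [hu3]
  have : ∀ i : Fin 3, u i.castSucc = (A - X) i.castSucc / 2 + w i := by
    intro i; rw [hui, lift_castSucc]
  simp only [this]
  ring

lemma hasF (A X : EuclideanSpace ℝ (Fin 4)) (h : ℝ) :
    HasFDerivAt (fun w : EuclideanSpace ℝ (Fin 3) =>
        h^2 * ∑ i : Fin 3, ((A - X) i.castSucc / 2 + w i)^2)
      (h^2 • ∑ i : Fin 3, ((A - X) i.castSucc) •
        (EuclideanSpace.proj i : EuclideanSpace ℝ (Fin 3) →L[ℝ] ℝ)) 0 := by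
  have h1 : ∀ i : Fin 3, HasFDerivAt
      (fun w : EuclideanSpace ℝ (Fin 3) => ((A - X) i.castSucc / 2 + w i)^2)
      (((A - X) i.castSucc) • (EuclideanSpace.proj i : EuclideanSpace ℝ (Fin 3) →L[ℝ] ℝ)) 0 := by
    intro i
    have hp : HasFDerivAt (fun w : EuclideanSpace ℝ (Fin 3) => w i)
        (EuclideanSpace.proj i : EuclideanSpace ℝ (Fin 3) →L[ℝ] ℝ) 0 :=
      (EuclideanSpace.proj i : EuclideanSpace ℝ (Fin 3) →L[ℝ] ℝ).hasFDerivAt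
    have ha := hp.const_add ((A - X) i.castSucc / 2)
    have h2 := ha.mul ha
    have h0 : (0 : EuclideanSpace ℝ (Fin 3)) i = 0 := rfl
    simp only [h0, add_zero] at h2
    have e1 : ((fun x : EuclideanSpace ℝ (Fin 3) => (A - X) i.castSucc / 2 + x i) *
        fun x => (A - X) i.castSucc / 2 + x i) = fun w => ((A - X) i.castSucc / 2 + w i)^2 := by
      funext w; simp [sq]
    rw [e1] at h2
    refine h2.congr_fderiv ?_
    ext w
    simp [ContinuousLinearMap.smul_apply]
    ring
  have hs := HasFDerivAt.fun_sum (fun i (_ : i ∈ Finset.univ) => h1 i)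
  have := hs.const_mul (h^2)
  exact this

/-- For B − A = h·e₄, h > 0, the map f : ℝ³ → ℝ³,
f(v₁,v₂,v₃) = (S_{ABC}(v)², S_{ABD}(v)², S_{ABE}(v)²) with v = (v₁,v₂,v₃,0), is
differentiable at 0 and |det Df(0)| = 24·|V(A,B,C,D,E)|·h⁵. -/
theorem deviation_jacobian_formula
    (A B C D E : EuclideanSpace ℝ (Fin 4)) (h : ℝ) (hh : 0 < h)
    (hAB : B - A = h • EuclideanSpace.single (3 : Fin 4) (1 : ℝ)) :
    DifferentiableAt ℝ
      (fun v : EuclideanSpace ℝ (Fin 3) =>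
        (![devArea A B C (lift v) ^ 2, devArea A B D (lift v) ^ 2,
           devArea A B E (lift v) ^ 2] : Fin 3 → ℝ)) 0 ∧
    |jacDet (fun v => ![devArea A B C (lift v) ^ 2, devArea A B D (lift v) ^ 2,
                        devArea A B E (lift v) ^ 2])|
      = 24 * |vol4 A B C D E| * h ^ 5 := by
  have hfun : (fun v : EuclideanSpace ℝ (Fin 3) =>
        (![devArea A B C (lift v) ^ 2, devArea A B D (lift v) ^ 2,
           devArea A B E (lift v) ^ 2] : Fin 3 → ℝ))
      = fun w => (fun i : Fin 3 =>
          h^2 * ∑ k : Fin 3, ((A - ![C, D, E] i) k.castSucc / 2 + w k)^2) := by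
    funext w i
    fin_cases i <;>
      simp [devArea_sq_poly A B _ h hAB w]
  set L : Fin 3 → (EuclideanSpace ℝ (Fin 3) →L[ℝ] ℝ) := fun i =>
    h^2 • ∑ k : Fin 3, ((A - ![C, D, E] i) k.castSucc) •
      (EuclideanSpace.proj k : EuclideanSpace ℝ (Fin 3) →L[ℝ] ℝ) with hL
  have hF : HasFDerivAt (fun w => (fun i : Fin 3 =>
          h^2 * ∑ k : Fin 3, ((A - ![C, D, E] i) k.castSucc / 2 + w k)^2))
      (ContinuousLinearMap.pi L) 0 :=
    hasFDerivAt_pi.2 fun i => hasF A (![C, D, E] i) h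
  constructor
  · rw [hfun]; exact hF.differentiableAt
  · rw [hfun]
    unfold jacDet
    rw [hF.fderiv]
    have hent : ∀ i j : Fin 3, (ContinuousLinearMap.pi L) (EuclideanSpace.single j 1) i
        = h^2 * (A - ![C, D, E] i) j.castSucc := by
      intro i j
      simp [hL, ContinuousLinearMap.sum_apply, EuclideanSpace.single_apply]
    have hM : (Matrix.of fun i j => (ContinuousLinearMap.pi L) (EuclideanSpace.single j 1) i)
        = Matrix.of fun i j : Fin 3 => h^2 * (A - ![C, D, E] i) j.castSucc := by
      ext i j; exact hent i j
    rw [hM]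
    have hB : ∀ i : Fin 4, B i = A i + h * (if i = (3 : Fin 4) then 1 else 0) := by
      intro i
      have h1 := congrArg (fun x : EuclideanSpace ℝ (Fin 4) => x i) hAB
      simp only [PiLp.sub_apply, PiLp.smul_apply, EuclideanSpace.single_apply,
        smul_eq_mul] at h1
      linarith [h1]
    have hdet : Matrix.det (Matrix.of fun i j : Fin 3 => h^2 * (A - ![C, D, E] i) j.castSucc)
        = 24 * vol4 A B C D E * h^5 := by
      have h4 : (Matrix.of fun i j => ![B - A, C - A, D - A, E - A] j i)
          = !![B 0 - A 0, C 0 - A 0, D 0 - A 0, E 0 - A 0;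
               B 1 - A 1, C 1 - A 1, D 1 - A 1, E 1 - A 1;
               B 2 - A 2, C 2 - A 2, D 2 - A 2, E 2 - A 2;
               B 3 - A 3, C 3 - A 3, D 3 - A 3, E 3 - A 3] := by
        ext i j
        fin_cases i <;> fin_cases j <;>
          simp [PiLp.sub_apply, show ((0:Fin 3).castSucc) = (0:Fin 4) from rfl,
            show ((1:Fin 3).castSucc) = (1:Fin 4) from rfl,
            show ((2:Fin 3).castSucc) = (2:Fin 4) from rfl] <;> first | rfl | exact Or.inl rfl
      have h3 : (Matrix.of fun i j : Fin 3 => h^2 * (A - ![C, D, E] i) j.castSucc)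
          = !![h^2 * (A 0 - C 0), h^2 * (A 1 - C 1), h^2 * (A 2 - C 2);
               h^2 * (A 0 - D 0), h^2 * (A 1 - D 1), h^2 * (A 2 - D 2);
               h^2 * (A 0 - E 0), h^2 * (A 1 - E 1), h^2 * (A 2 - E 2)] := by
        ext i j
        fin_cases i <;> fin_cases j <;>
          simp [PiLp.sub_apply, show ((0:Fin 3).castSucc) = (0:Fin 4) from rfl,
            show ((1:Fin 3).castSucc) = (1:Fin 4) from rfl,
            show ((2:Fin 3).castSucc) = (2:Fin 4) from rfl] <;> first | rfl | exact Or.inl rfl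
      unfold vol4
      rw [h4, h3]
      rw [hB 0, hB 1, hB 2, hB 3]
      norm_num
      simp [Matrix.det_succ_row_zero, Fin.sum_univ_succ, Matrix.det_fin_three,
        show ((1:Fin 4).succAbove 2) = 3 by decide, show ((2:Fin 4).succAbove 2) = 3 by decide,
        show ((0:Fin 4).succAbove 2) = 3 by decide, show ((3:Fin 4).succAbove 2) = 2 by decide,
        show (Fin.castSucc (2:Fin 3)) = (2:Fin 4) by decide]
      ring
    rw [hdet]
    rw [abs_mul, abs_mul]
    rw [abs_of_pos (by positivity : (0:ℝ) < h^5)]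
    norm_num
end

section
/- Let A, B ∈ ℝ⁴ be distinct points, and for each point X ∈ ℝ⁴ and each orthonormal triple (w₁, w₂, w₃) of vectors orthogonal to B − A, consider the map f : ℝ³ → ℝ³, f(t₁,t₂,t₃) = (S_{ABC}(Σtⱼwⱼ)², S_{ABD}(Σtⱼwⱼ)², S_{ABE}(Σtⱼwⱼ)²), where S_{ABX}(v) is the deviated area of triangle ABX and C, D, E ∈ ℝ⁴. Then |det Df(0)| = 24 · |V(A,B,C,D,E)| · ‖B − A‖⁵; in particular this value does not depend on the choice of the orthonormal basis (w₁, w₂, w₃) of the orthogonal complement of B − A. -/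
open RealInnerProductSpace

section Aux

local notation "E3" => EuclideanSpace ℝ (Fin 3)
local notation "E4" => EuclideanSpace ℝ (Fin 4)

lemma devArea_sq_aux (A B X v : EuclideanSpace ℝ (Fin 4))
    (hv : (inner ℝ (B - A) v : ℝ) = 0) :
    devArea A B X v ^ 2
      = ‖B - A‖^2 * (inner ℝ ((1/2:ℝ)•(A-X) + v) ((1/2:ℝ)•(A-X) + v) : ℝ)
        - (inner ℝ (B - A) ((1/2:ℝ)•(A-X)) : ℝ) ^ 2 := by
  have hQP : mid X A - mid B X = (1/2:ℝ)•(A-B) := by unfold mid; module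
  have hRP : mid A B + v - mid B X = (1/2:ℝ)•(A-X) + v := by unfold mid; module
  unfold devArea triArea
  rw [hQP, hRP]
  set q : EuclideanSpace ℝ (Fin 4) := (1/2:ℝ)•(A-B) with hq
  set r : EuclideanSpace ℝ (Fin 4) := (1/2:ℝ)•(A-X) + v with hr
  have hs : 0 ≤ ‖q‖^2 * ‖r‖^2 - (inner ℝ q r : ℝ)^2 := by
    have := real_inner_mul_inner_self_le q r
    rw [real_inner_self_eq_norm_sq, real_inner_self_eq_norm_sq] at this
    nlinarith [this]
  have h1 : (4 * ((1/2) * Real.sqrt (‖q‖^2 * ‖r‖^2 - (inner ℝ q r : ℝ)^2)))^2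
      = 4 * (‖q‖^2 * ‖r‖^2 - (inner ℝ q r : ℝ)^2) := by
    rw [mul_pow, mul_pow, Real.sq_sqrt hs]; ring
  rw [h1]
  have hnq : ‖q‖^2 = (1/4) * ‖B-A‖^2 := by
    have : ‖q‖ = (1/2) * ‖B-A‖ := by
      rw [hq, norm_smul, norm_sub_rev]; norm_num
    rw [this]; ring
  have hir : (inner ℝ q r : ℝ) = -(1/2) * (inner ℝ (B-A) ((1/2:ℝ)•(A-X)) : ℝ) := by
    have hAB : A - B = -(B - A) := by module
    rw [hq, hAB, real_inner_smul_left, inner_neg_left, hr, inner_add_right, hv]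
    ring
  have hnr : ‖r‖^2 = (inner ℝ r r : ℝ) := (real_inner_self_eq_norm_sq r).symm
  rw [hnq, hir, hnr]; ring

lemma comp_deriv_aux (T : E3 →L[ℝ] E4) (m : E4) (a c : ℝ) :
    HasFDerivAt (fun t : E3 => a * (inner ℝ (m + T t) (m + T t) : ℝ) - c)
      (a • ((fderivInnerCLM ℝ (m, m)).comp (T.prod T))) 0 := by
  have h1 : HasFDerivAt (fun t : E3 => m + T t) T 0 := T.hasFDerivAt.const_add m
  have h2 := (h1.inner ℝ h1).const_mul a
  have h3 := h2.sub_const c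
  simpa using h3

/-- The continuous linear map `t ↦ ∑ j, t j • w j`. -/
noncomputable def Tmap (w : Fin 3 → E4) : E3 →L[ℝ] E4 :=
  ∑ j, (EuclideanSpace.proj j).smulRight (w j)

lemma Tmap_apply (w : Fin 3 → E4) (t : E3) : Tmap w t = ∑ j, t j • w j := by
  simp [Tmap, ContinuousLinearMap.sum_apply]

lemma Tmap_single (w : Fin 3 → E4) (j : Fin 3) :
    Tmap w (EuclideanSpace.single j 1) = w j := by
  simp [Tmap, ContinuousLinearMap.sum_apply, EuclideanSpace.single_apply]

lemma snoc_orthonormal_aux (u : E4) (hu : u ≠ 0) (w : Fin 3 → E4) (hw : Orthonormal ℝ w)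
    (hperp : ∀ j, (inner ℝ u (w j) : ℝ) = 0) :
    Orthonormal ℝ (Fin.snoc w (‖u‖⁻¹ • u) : Fin 4 → E4) := by
  have hnu : ‖u‖ ≠ 0 := norm_ne_zero_iff.mpr hu
  rw [orthonormal_iff_ite]
  have hw' := orthonormal_iff_ite.mp hw
  intro i j
  refine Fin.lastCases ?_ ?_ i <;> [skip; intro i'] <;>
    refine Fin.lastCases ?_ ?_ j <;> [skip; intro j'; skip; intro j']
  · rw [Fin.snoc_last, real_inner_smul_left, real_inner_smul_right,
      real_inner_self_eq_norm_sq, if_pos rfl]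
    field_simp
  · have h : (Fin.last 3) ≠ j'.castSucc := (Fin.castSucc_lt_last j').ne'
    rw [Fin.snoc_last, Fin.snoc_castSucc, real_inner_smul_left, hperp j', if_neg h]
    ring
  · have h : i'.castSucc ≠ (Fin.last 3) := (Fin.castSucc_lt_last i').ne
    rw [Fin.snoc_last, Fin.snoc_castSucc, real_inner_smul_right,
      real_inner_comm u (w i'), hperp i', if_neg h]
    ring
  · rw [Fin.snoc_castSucc, Fin.snoc_castSucc, hw' i' j']
    simp [Fin.castSucc_inj]

lemma abs_det_eq_aux (u : E4) (hu : u ≠ 0) (w : Fin 3 → E4) (hw : Orthonormal ℝ w)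
    (hperp : ∀ j, (inner ℝ u (w j) : ℝ) = 0) (v : Fin 4 → E4) (hv0 : v 0 = u) :
    |Matrix.det (Matrix.of fun i j => (v i) j)|
      = ‖u‖ * |Matrix.det (Matrix.of fun (i j : Fin 3) => (inner ℝ (v i.succ) (w j) : ℝ))| := by
  classical
  have hnu : ‖u‖ ≠ 0 := norm_ne_zero_iff.mpr hu
  set e : Fin 4 → E4 := Fin.snoc w (‖u‖⁻¹ • u) with he
  have he_on : Orthonormal ℝ e := snoc_orthonormal_aux u hu w hw hperp
  have hcard : Fintype.card (Fin 4) = Module.finrank ℝ E4 := by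
    simp [finrank_euclideanSpace]
  let bb : Module.Basis (Fin 4) ℝ E4 :=
    basisOfLinearIndependentOfCardEqFinrank he_on.linearIndependent hcard
  have hbb : ⇑bb = e := coe_basisOfLinearIndependentOfCardEqFinrank _ _
  have hbbon : Orthonormal ℝ bb := by rwa [hbb]
  let b : OrthonormalBasis (Fin 4) ℝ E4 := bb.toOrthonormalBasis hbbon
  have hb : ⇑b = e := by
    rw [show ⇑b = ⇑bb from Module.Basis.coe_toOrthonormalBasis bb hbbon, hbb]
  have hpars : ∀ x y : E4, ∑ j, (inner ℝ x (e j) : ℝ) * (inner ℝ (e j) y : ℝ) = (inner ℝ x y : ℝ) := by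
    intro x y
    have := b.sum_inner_mul_inner x y
    simpa [hb] using this
  set N : Matrix (Fin 4) (Fin 4) ℝ := Matrix.of (fun i j => (inner ℝ (v i) (e j) : ℝ)) with hN
  set M : Matrix (Fin 4) (Fin 4) ℝ := Matrix.of (fun i j => (v i) j) with hM
  set G : Matrix (Fin 3) (Fin 3) ℝ :=
    Matrix.of (fun i j => (inner ℝ (v i.succ) (w j) : ℝ)) with hG
  have hGram : N * N.transpose = M * M.transpose := by
    ext i k
    simp only [Matrix.mul_apply, Matrix.transpose_apply, hN, hM, Matrix.of_apply]
    calc ∑ j, (inner ℝ (v i) (e j) : ℝ) * (inner ℝ (v k) (e j) : ℝ)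
        = ∑ j, (inner ℝ (v i) (e j) : ℝ) * (inner ℝ (e j) (v k) : ℝ) := by
          refine Finset.sum_congr rfl fun j _ => ?_
          rw [real_inner_comm (v k) (e j)]
      _ = (inner ℝ (v i) (v k) : ℝ) := hpars _ _
      _ = ∑ j, (v i) j * (v k) j := by
          simp [PiLp.inner_apply, RCLike.inner_apply, mul_comm]
  have hdet2 : N.det ^ 2 = M.det ^ 2 := by
    have h1 : N.det * N.det = M.det * M.det := by
      calc N.det * N.det = N.det * N.transpose.det := by rw [Matrix.det_transpose]
        _ = (N * N.transpose).det := (Matrix.det_mul _ _).symm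
        _ = (M * M.transpose).det := by rw [hGram]
        _ = M.det * M.transpose.det := Matrix.det_mul _ _
        _ = M.det * M.det := by rw [Matrix.det_transpose]
    nlinarith [h1]
  have habs : |N.det| = |M.det| := by
    have := congrArg Real.sqrt hdet2
    simpa [Real.sqrt_sq_eq_abs] using this
  have he0 : e (0:Fin 4) = w 0 := by
    rw [show (0:Fin 4) = Fin.castSucc 0 from rfl, he, Fin.snoc_castSucc]
  have he1 : e (1:Fin 4) = w 1 := by
    rw [show (1:Fin 4) = Fin.castSucc 1 from rfl, he, Fin.snoc_castSucc]
  have he2 : e (2:Fin 4) = w 2 := by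
    rw [show (2:Fin 4) = Fin.castSucc 2 from rfl, he, Fin.snoc_castSucc]
  have he3 : e (3:Fin 4) = ‖u‖⁻¹ • u := by
    rw [show (3:Fin 4) = Fin.last 3 from rfl, he, Fin.snoc_last]
  have hsub : N.submatrix Fin.succ (Fin.succAbove 3) = G := by
    ext i j
    have : (3:Fin 4).succAbove j = j.castSucc := by
      rw [show (3:Fin 4) = Fin.last 3 from rfl, Fin.succAbove_last]
    simp only [Matrix.submatrix_apply, hN, Matrix.of_apply, this, hG, he, Fin.snoc_castSucc]
  have hdetN : N.det = -(‖u‖ * G.det) := by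
    rw [Matrix.det_succ_row_zero, Fin.sum_univ_four]
    have h0 : N 0 0 = 0 := by
      simp only [hN, Matrix.of_apply, hv0, he0]; exact hperp 0
    have h1 : N 0 1 = 0 := by
      simp only [hN, Matrix.of_apply, hv0, he1]; exact hperp 1
    have h2 : N 0 2 = 0 := by
      simp only [hN, Matrix.of_apply, hv0, he2]; exact hperp 2
    have h3 : N 0 3 = ‖u‖ := by
      simp only [hN, Matrix.of_apply, hv0, he3, real_inner_smul_right,
        real_inner_self_eq_norm_sq]
      field_simp
    rw [h0, h1, h2, h3, hsub]
    rw [show (((3:Fin 4)):ℕ) = 3 from rfl]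
    ring
  rw [habs.symm] at *
  rw [hdetN, abs_neg, abs_mul, abs_norm]

end Aux

/-- coordinate-free form of the deviation formula. For A ≠ B and any
orthonormal triple (w₁,w₂,w₃) of vectors orthogonal to B − A, the map
f(t₁,t₂,t₃) = (S_{ABC}(Σtⱼwⱼ)², S_{ABD}(Σtⱼwⱼ)², S_{ABE}(Σtⱼwⱼ)²) satisfies
|det Df(0)| = 24·|V(A,B,C,D,E)|·‖B−A‖⁵ — independent of the choice of (w₁,w₂,w₃). -/
theorem deviation_jacobian_formula_coordinate_free
    (A B C D E : EuclideanSpace ℝ (Fin 4)) (hAB : A ≠ B)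
    (w : Fin 3 → EuclideanSpace ℝ (Fin 4)) (hw : Orthonormal ℝ w)
    (hperp : ∀ j, (inner ℝ (w j) (B - A) : ℝ) = 0) :
    |jacDet (fun t => ![devArea A B C (∑ j, t j • w j) ^ 2,
                        devArea A B D (∑ j, t j • w j) ^ 2,
                        devArea A B E (∑ j, t j • w j) ^ 2])|
      = 24 * |vol4 A B C D E| * ‖B - A‖ ^ 5 := by
  classical
  have hu : B - A ≠ 0 := sub_ne_zero.mpr hAB.symm
  have hperpu : ∀ j, (inner ℝ (B - A) (w j) : ℝ) = 0 := fun j => by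
    rw [real_inner_comm]; exact hperp j
  set T : EuclideanSpace ℝ (Fin 3) →L[ℝ] EuclideanSpace ℝ (Fin 4) := Tmap w with hT
  set X : Fin 3 → EuclideanSpace ℝ (Fin 4) := ![C, D, E] with hX
  set m : Fin 3 → EuclideanSpace ℝ (Fin 4) := fun i => (1/2:ℝ) • (A - X i) with hm
  set D' : Fin 3 → (EuclideanSpace ℝ (Fin 3) →L[ℝ] ℝ) := fun i =>
    ‖B - A‖^2 • ((fderivInnerCLM ℝ (m i, m i)).comp (T.prod T)) with hD'
  -- the key reformulation of the squared deviated areas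
  have hv : ∀ t : EuclideanSpace ℝ (Fin 3),
      (inner ℝ (B - A) (∑ j, t j • w j) : ℝ) = 0 := by
    intro t
    rw [inner_sum]
    exact Finset.sum_eq_zero fun j _ => by rw [real_inner_smul_right, hperpu j, mul_zero]
  have hg : ∀ (i : Fin 3) (t : EuclideanSpace ℝ (Fin 3)),
      devArea A B (X i) (∑ j, t j • w j) ^ 2
        = ‖B - A‖^2 * (inner ℝ (m i + T t) (m i + T t) : ℝ)
          - (inner ℝ (B - A) (m i) : ℝ)^2 := by
    intro i t
    rw [devArea_sq_aux A B (X i) _ (hv t), hT, Tmap_apply, hm]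
  -- derivative of the full map
  have hFd : HasFDerivAt
      (fun t => ![devArea A B C (∑ j, t j • w j) ^ 2,
                  devArea A B D (∑ j, t j • w j) ^ 2,
                  devArea A B E (∑ j, t j • w j) ^ 2])
      (ContinuousLinearMap.pi D') 0 := by
    apply hasFDerivAt_pi''
    intro i
    rw [ContinuousLinearMap.proj_pi]
    have heq : (fun t : EuclideanSpace ℝ (Fin 3) =>
        ![devArea A B C (∑ j, t j • w j) ^ 2,
          devArea A B D (∑ j, t j • w j) ^ 2,
          devArea A B E (∑ j, t j • w j) ^ 2] i)
        = fun t => ‖B - A‖^2 * (inner ℝ (m i + T t) (m i + T t) : ℝ)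
            - (inner ℝ (B - A) (m i) : ℝ)^2 := by
      funext t
      fin_cases i
      · exact hg 0 t
      · exact hg 1 t
      · exact hg 2 t
    rw [heq]
    exact comp_deriv_aux T (m i) _ _
  have hfderiv := hFd.fderiv
  -- the Jacobian matrix
  set vv : Fin 4 → EuclideanSpace ℝ (Fin 4) := ![B - A, C - A, D - A, E - A] with hvv
  set G : Matrix (Fin 3) (Fin 3) ℝ :=
    Matrix.of (fun i j => (inner ℝ (vv i.succ) (w j) : ℝ)) with hG
  have hentry : ∀ (i j : Fin 3),
      fderiv ℝ (fun t : EuclideanSpace ℝ (Fin 3) => ![devArea A B C (∑ j, t j • w j) ^ 2,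
                  devArea A B D (∑ j, t j • w j) ^ 2,
                  devArea A B E (∑ j, t j • w j) ^ 2]) 0 (EuclideanSpace.single j 1) i
        = (-(‖B - A‖^2)) * G i j := by
    intro i j
    rw [hfderiv]
    have h1 : (ContinuousLinearMap.pi D') (EuclideanSpace.single j 1) i
        = D' i (EuclideanSpace.single j 1) := rfl
    rw [h1, hD']
    simp only [ContinuousLinearMap.coe_smul', Pi.smul_apply,
      ContinuousLinearMap.coe_comp', Function.comp_apply,
      ContinuousLinearMap.prod_apply, fderivInnerCLM_apply, hT, Tmap_single,
      smul_eq_mul]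
    have hmw : (inner ℝ (m i) (w j) : ℝ) = -(1/2) * (inner ℝ (X i - A) (w j) : ℝ) := by
      rw [hm]
      have : A - X i = -(X i - A) := by module
      rw [real_inner_smul_left, this, inner_neg_left]
      ring
    have hXv : X i - A = vv i.succ := by
      fin_cases i <;> simp [hX, hvv, Fin.succ]
    rw [real_inner_comm (m i) (w j), hmw, hXv, hG]
    simp only [Matrix.of_apply]
    ring
  have hJ : (Matrix.of fun i j =>
      fderiv ℝ (fun t : EuclideanSpace ℝ (Fin 3) => ![devArea A B C (∑ j, t j • w j) ^ 2,
                  devArea A B D (∑ j, t j • w j) ^ 2,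
                  devArea A B E (∑ j, t j • w j) ^ 2]) 0 (EuclideanSpace.single j 1) i)
      = (-(‖B - A‖^2)) • G := by
    ext i j
    rw [Matrix.smul_apply, smul_eq_mul, Matrix.of_apply, hentry i j]
  -- determinant computations
  have hjac : |jacDet (fun t : EuclideanSpace ℝ (Fin 3) => ![devArea A B C (∑ j, t j • w j) ^ 2,
                  devArea A B D (∑ j, t j • w j) ^ 2,
                  devArea A B E (∑ j, t j • w j) ^ 2])|
      = ‖B - A‖^6 * |G.det| := by
    rw [jacDet, hJ, Matrix.det_smul, abs_mul]
    congr 1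
    rw [abs_pow, abs_neg, abs_pow, abs_norm, ← pow_mul]
    norm_num
  have hvol : 24 * |vol4 A B C D E| = |Matrix.det (Matrix.of fun i j => (vv i) j)| := by
    rw [vol4]
    have htr : (Matrix.of fun i j => ![B - A, C - A, D - A, E - A] j i)
        = (Matrix.of fun i j => (vv i) j).transpose := by
      ext i j
      simp [hvv, Matrix.transpose_apply]
    rw [htr, Matrix.det_transpose, abs_mul,
      abs_of_nonneg (by norm_num : (0:ℝ) ≤ 1/24)]
    ring
  have hdetM := abs_det_eq_aux (B - A) hu w hw hperpu vv (by simp [hvv])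
  rw [hjac, hvol, hdetM, ← hG]
  ring
end

section
/- Let A, B, C, D, E ∈ ℝ⁴ with A ≠ B and V(A,B,C,D,E) ≠ 0. For X ∈ {C, D, E} let f_X : ℝ⁴ → ℝ, f_X(v) = S_{ABX}(v)², the squared deviated area of triangle ABX. Then the three linear functionals Df_C(0), Df_D(0), Df_E(0), restricted to the (3-dimensional) orthogonal complement of B − A in ℝ⁴, are linearly independent; consequently, by prescribing the deviation vector of the edge AB one can obtain any prescribed triple of values of the three differentials d(S²_{ABC}), d(S²_{ABD}), d(S²_{ABE}). -/
local notation "E4" => EuclideanSpace ℝ (Fin 4)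

lemma devArea_sq_eq (A B X v : E4) :
    devArea A B X v ^ 2 =
      4 * (‖(1/2 : ℝ) • (A - B)‖^2 * ‖(1/2 : ℝ) • (A - X) + v‖^2
        - (inner ℝ ((1/2 : ℝ) • (A - B)) ((1/2 : ℝ) • (A - X) + v) : ℝ)^2) := by
  have h1 : mid X A - mid B X = (1/2 : ℝ) • (A - B) := by
    unfold mid; module
  have h2 : mid A B + v - mid B X = (1/2 : ℝ) • (A - X) + v := by
    unfold mid; module
  have hT : (0:ℝ) ≤ ‖(1/2 : ℝ) • (A - B)‖^2 * ‖(1/2 : ℝ) • (A - X) + v‖^2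
        - (inner ℝ ((1/2 : ℝ) • (A - B)) ((1/2 : ℝ) • (A - X) + v) : ℝ)^2 := by
    have := real_inner_mul_inner_self_le ((1/2 : ℝ) • (A - B)) ((1/2 : ℝ) • (A - X) + v)
    rw [real_inner_self_eq_norm_sq, real_inner_self_eq_norm_sq] at this
    nlinarith [this]
  unfold devArea triArea
  rw [h1, h2, mul_pow, mul_pow, Real.sq_sqrt hT]
  ring

lemma fderiv_devArea_sq (A B X w : E4) (hw : (inner ℝ w (B - A) : ℝ) = 0) :
    fderiv ℝ (fun v => devArea A B X v ^ 2) 0 w = ‖A - B‖^2 * (inner ℝ (A - X) w : ℝ) := by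
  set u : E4 := (1/2:ℝ) • (A - B) with hu
  set x : E4 := (1/2:ℝ) • (A - X) with hx
  have h1 : HasFDerivAt (fun v : E4 => x + v) (ContinuousLinearMap.id ℝ E4) 0 := by
    simpa using (hasFDerivAt_id (0:E4)).const_add x
  have hxx := h1.inner ℝ h1
  have hux := (hasFDerivAt_const u (0:E4)).inner ℝ h1
  have hg := (((hxx.const_mul (‖u‖^2)).sub (hux.mul hux)).const_mul (4:ℝ))
  have heq : (fun v => devArea A B X v ^ 2) =
      (fun v : E4 => 4 * (‖u‖^2 * (inner ℝ (x + v) (x + v) : ℝ)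
        - (inner ℝ u (x + v) : ℝ) * (inner ℝ u (x + v) : ℝ))) := by
    funext v
    rw [devArea_sq_eq, real_inner_self_eq_norm_sq, ← hu, ← hx]
    ring
  rw [heq, HasFDerivAt.fderiv (f := fun v : E4 => 4 * (‖u‖^2 * (inner ℝ (x + v) (x + v) : ℝ)
        - (inner ℝ u (x + v) : ℝ) * (inner ℝ u (x + v) : ℝ))) hg]
  simp only [ContinuousLinearMap.smul_apply, ContinuousLinearMap.sub_apply,
    ContinuousLinearMap.comp_apply, ContinuousLinearMap.prod_apply,
    ContinuousLinearMap.id_apply, ContinuousLinearMap.zero_apply,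
    fderivInnerCLM_apply, ContinuousLinearMap.add_apply, add_zero,
    inner_zero_right, smul_eq_mul]
  have e1 : (inner ℝ x w : ℝ) = (1/2) * (inner ℝ (A - X) w : ℝ) := by
    rw [hx, real_inner_smul_left]
  have e2 : (inner ℝ w x : ℝ) = (1/2) * (inner ℝ (A - X) w : ℝ) := by
    rw [real_inner_comm, e1]
  have e3 : (inner ℝ u w : ℝ) = 0 := by
    rw [hu, real_inner_smul_left, real_inner_comm, show A - B = -(B - A) by abel,
      inner_neg_right, hw]
    ring
  have e5 : ‖u‖^2 = (1/4) * ‖A - B‖^2 := by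
    rw [hu, norm_smul]
    simp
    ring
  simp only [inner_zero_left, inner_zero_right]
  rw [e1, e2, e3, e5]
  ring

set_option maxHeartbeats 1000000 in
lemma det4 (M : Matrix (Fin 4) (Fin 4) ℝ) : M.det =
    M 0 0 * (M 1 1 * (M 2 2 * M 3 3 - M 2 3 * M 3 2) - M 1 2 * (M 2 1 * M 3 3 - M 2 3 * M 3 1) + M 1 3 * (M 2 1 * M 3 2 - M 2 2 * M 3 1))
  - M 0 1 * (M 1 0 * (M 2 2 * M 3 3 - M 2 3 * M 3 2) - M 1 2 * (M 2 0 * M 3 3 - M 2 3 * M 3 0) + M 1 3 * (M 2 0 * M 3 2 - M 2 2 * M 3 0))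
  + M 0 2 * (M 1 0 * (M 2 1 * M 3 3 - M 2 3 * M 3 1) - M 1 1 * (M 2 0 * M 3 3 - M 2 3 * M 3 0) + M 1 3 * (M 2 0 * M 3 1 - M 2 1 * M 3 0))
  - M 0 3 * (M 1 0 * (M 2 1 * M 3 2 - M 2 2 * M 3 1) - M 1 1 * (M 2 0 * M 3 2 - M 2 2 * M 3 0) + M 1 2 * (M 2 0 * M 3 1 - M 2 1 * M 3 0)) := by
  rw [Matrix.det_succ_row_zero]
  simp [Fin.sum_univ_succ, Matrix.det_fin_three, Matrix.submatrix,
    show (Fin.succ 2 : Fin 4) = 3 from rfl,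
    show Fin.succAbove (1 : Fin 4) 2 = 3 by decide,
    show Fin.succAbove (2 : Fin 4) 2 = 3 by decide,
    show Fin.succAbove (3 : Fin 4) 2 = 2 by decide]
  ring

set_option maxHeartbeats 1000000 in
lemma detM_eq (A B C D E : E4) :
    Matrix.det (Matrix.of fun i j => (![B - A, A - C, A - D, A - E] i) j)
      = -(24 * vol4 A B C D E) := by
  unfold vol4
  rw [det4, det4]
  simp [PiLp.sub_apply]
  ring

/-- when V(A,B,C,D,E) ≠ 0, the differentials dS²_{ABC}, dS²_{ABD}, dS²_{ABE}
restricted to the orthogonal complement of B − A are linearly independent; consequently,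
a deviation vector w ⊥ B − A can be chosen realizing any prescribed triple of values
of the three differentials. -/
theorem deviation_differentials_independent
    (A B C D E : EuclideanSpace ℝ (Fin 4)) (hAB : A ≠ B)
    (hV : vol4 A B C D E ≠ 0) :
    (∀ lC lD lE : ℝ,
      (∀ w : EuclideanSpace ℝ (Fin 4), (inner ℝ w (B - A) : ℝ) = 0 →
        lC * fderiv ℝ (fun v => devArea A B C v ^ 2) 0 w +
        lD * fderiv ℝ (fun v => devArea A B D v ^ 2) 0 w +
        lE * fderiv ℝ (fun v => devArea A B E v ^ 2) 0 w = 0) →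
      lC = 0 ∧ lD = 0 ∧ lE = 0) ∧
    (∀ rC rD rE : ℝ, ∃ w : EuclideanSpace ℝ (Fin 4),
      (inner ℝ w (B - A) : ℝ) = 0 ∧
      fderiv ℝ (fun v => devArea A B C v ^ 2) 0 w = rC ∧
      fderiv ℝ (fun v => devArea A B D v ^ 2) 0 w = rD ∧
      fderiv ℝ (fun v => devArea A B E v ^ 2) 0 w = rE) := by
  have hABne : A - B ≠ 0 := sub_ne_zero.mpr hAB
  have hk0 : ‖A - B‖^2 ≠ 0 := pow_ne_zero _ (norm_ne_zero_iff.mpr hABne)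
  have key : ∀ rC rD rE : ℝ, ∃ w : EuclideanSpace ℝ (Fin 4),
      (inner ℝ w (B - A) : ℝ) = 0 ∧
      fderiv ℝ (fun v => devArea A B C v ^ 2) 0 w = rC ∧
      fderiv ℝ (fun v => devArea A B D v ^ 2) 0 w = rD ∧
      fderiv ℝ (fun v => devArea A B E v ^ 2) 0 w = rE := by
    intro rC rD rE
    set k : ℝ := ‖A - B‖^2 with hkdef
    set M : Matrix (Fin 4) (Fin 4) ℝ :=
      Matrix.of fun i j => (![B - A, A - C, A - D, A - E] i) j with hM
    have hdet : M.det ≠ 0 := by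
      rw [hM, detM_eq]
      intro h
      apply hV
      have : (24 : ℝ) * vol4 A B C D E = 0 := by linarith [neg_eq_zero.mp h]
      linarith
    set r : Fin 4 → ℝ := ![0, rC / k, rD / k, rE / k] with hr
    set wv : Fin 4 → ℝ := M⁻¹.mulVec r with hwv
    have hMw : M.mulVec wv = r := by
      rw [hwv, Matrix.mulVec_mulVec,
        Matrix.mul_nonsing_inv _ (isUnit_iff_ne_zero.mpr hdet), Matrix.one_mulVec]
    set w : E4 := (WithLp.equiv 2 (Fin 4 → ℝ)).symm wv with hwdef
    have hinner : ∀ y : E4, (inner ℝ y w : ℝ) = ∑ j, y j * wv j := by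
      intro y
      rw [PiLp.inner_apply]
      simp [hwdef, RCLike.inner_apply]
      exact Finset.sum_congr rfl fun _ _ => mul_comm _ _
    have hval : ∀ i, ∑ j, M i j * wv j = r i := by
      intro i
      rw [← congrFun hMw i]
      rfl
    have e0 : (inner ℝ w (B - A) : ℝ) = 0 := by
      rw [real_inner_comm, hinner]
      have := hval 0
      simpa [hM, hr] using this
    have eC : (inner ℝ (A - C) w : ℝ) = rC / k := by
      rw [hinner]
      have := hval 1
      simpa [hM, hr] using this
    have eD : (inner ℝ (A - D) w : ℝ) = rD / k := by
      rw [hinner]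
      have := hval 2
      simpa [hM, hr] using this
    have eE : (inner ℝ (A - E) w : ℝ) = rE / k := by
      rw [hinner]
      have := hval 3
      simpa [hM, hr] using this
    refine ⟨w, e0, ?_, ?_, ?_⟩
    · rw [fderiv_devArea_sq A B C w e0, eC]; field_simp; rw [hkdef]; ring
    · rw [fderiv_devArea_sq A B D w e0, eD]; field_simp; rw [hkdef]; ring
    · rw [fderiv_devArea_sq A B E w e0, eE]; field_simp; rw [hkdef]; ring
  refine ⟨?_, key⟩
  intro lC lD lE h
  obtain ⟨w1, hw1, hc1, hd1, he1⟩ := key 1 0 0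
  obtain ⟨w2, hw2, hc2, hd2, he2⟩ := key 0 1 0
  obtain ⟨w3, hw3, hc3, hd3, he3⟩ := key 0 0 1
  have h1 := h w1 hw1
  have h2 := h w2 hw2
  have h3 := h w3 hw3
  rw [hc1, hd1, he1] at h1
  rw [hc2, hd2, he2] at h2
  rw [hc3, hd3, he3] at h3
  refine ⟨by linarith, by linarith, by linarith⟩
end
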